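/- Let φ : X × Y → ℝ be convex-concave and let z_0, ..., z_N be points in Z = X × Y with z̄_N = (1/(N+1)) ∑_{k=0}^N z_k. Then the saddle-point gap satisfies max_{y'∈Y} φ(x̄_N, y') − min_{x'∈X} φ(x', ȳ_N) ≤ max_{u∈Z} (1/(N+1)) ∑_{k=0}^N ⟨G(z_k), z_k − u⟩, where G(z) = (∇_x φ(z), −∇_y φ(z)). -/

import Mathlib

/-!
For `u = (x', y')`, the gradient inequalities for the convex function `φ(·, y_k)` and the concave
function `φ(x_k, ·)` give `φ(x_k, y') - φ(x', y_k) ≤ ⟨G(z_k), z_k - u⟩`. Averaging over `k` and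
applying Jensen's inequality in each variable bounds `φ(x̄_N, y') - φ(x', ȳ_N)` by the averaged
linearization at `u`; it remains to take the supremum over `y'` and the infimum over `x'`.
Compactness of `X × Y` keeps the right-hand supremum finite (an unbounded `sSup` in `ℝ` is `0`).
-/

open RealInnerProductSpace

theorem ConvexOn.add_fderiv_sub_le {E : Type*} [NormedAddCommGroup E] [NormedSpace ℝ E]
    {S : Set E} {f : E → ℝ} {f' : E →L[ℝ] ℝ} {x y : E}
    (hf : ConvexOn ℝ S f) (hx : x ∈ S) (hy : y ∈ S) (hf' : HasFDerivAt f f' x) :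
    f x + f' (y - x) ≤ f y := by
  have hline : HasDerivAt (f ∘ AffineMap.lineMap (k := ℝ) x y) (f' (y - x)) 0 := by
    refine HasFDerivAt.comp_hasDerivAt (0 : ℝ) ?_ AffineMap.hasDerivAt_lineMap
    simpa using hf'
  have h := (hf.comp_affineMap (AffineMap.lineMap (k := ℝ) x y)).le_slope_of_hasDerivAt
    (by simpa using hx) (by simpa using hy) zero_lt_one hline
  simp only [slope_def_field, Function.comp_apply, AffineMap.lineMap_apply_zero,
    AffineMap.lineMap_apply_one, sub_zero, div_one] at h
  linarith

theorem ConcaveOn.le_add_fderiv_sub {E : Type*} [NormedAddCommGroup E] [NormedSpace ℝ E]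
    {S : Set E} {f : E → ℝ} {f' : E →L[ℝ] ℝ} {x y : E}
    (hf : ConcaveOn ℝ S f) (hx : x ∈ S) (hy : y ∈ S) (hf' : HasFDerivAt f f' x) :
    f y ≤ f x + f' (y - x) := by
  have := hf.neg.add_fderiv_sub_le hx hy hf'.neg
  simp only [Pi.neg_apply, neg_apply] at this
  linarith

section Gradient

variable {E : Type*} [NormedAddCommGroup E] [InnerProductSpace ℝ E] [CompleteSpace E]
  {S : Set E} {f : E → ℝ} {g x y : E}

theorem ConvexOn.add_inner_gradient_sub_le (hf : ConvexOn ℝ S f) (hx : x ∈ S) (hy : y ∈ S)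
    (hg : HasGradientAt f g x) : f x + ⟪g, y - x⟫ ≤ f y :=
  hf.add_fderiv_sub_le hx hy hg.hasFDerivAt

theorem ConcaveOn.le_add_inner_gradient_sub (hf : ConcaveOn ℝ S f) (hx : x ∈ S) (hy : y ∈ S)
    (hg : HasGradientAt f g x) : f y ≤ f x + ⟪g, y - x⟫ :=
  hf.le_add_fderiv_sub hx hy hg.hasFDerivAt

end Gradient

theorem convex_concave_map_sum_sub_map_sum_le {E F ι : Type*} [AddCommGroup E] [Module ℝ E]
    [AddCommGroup F] [Module ℝ F] {φ : E → F → ℝ} {s : Finset ι} {w : ι → ℝ}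
    {p : ι → E} {q : ι → F} {x' : E} {y' : F}
    (hconv : ConvexOn ℝ Set.univ fun x => φ x y') (hconc : ConcaveOn ℝ Set.univ fun y => φ x' y)
    (hw₀ : ∀ i ∈ s, 0 ≤ w i) (hw₁ : ∑ i ∈ s, w i = 1) :
    φ (∑ i ∈ s, w i • p i) y' - φ x' (∑ i ∈ s, w i • q i) ≤
      ∑ i ∈ s, w i * (φ (p i) y' - φ x' (q i)) := by
  have hp := hconv.map_sum_le hw₀ hw₁ fun i _ => Set.mem_univ (p i)
  have hq := hconc.le_map_sum hw₀ hw₁ fun i _ => Set.mem_univ (q i)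
  simp only [smul_eq_mul] at hp hq
  simp only [mul_sub, Finset.sum_sub_distrib]
  linarith

section ConvexConcave

variable {E F : Type*} [NormedAddCommGroup E] [InnerProductSpace ℝ E]
  [NormedAddCommGroup F] [InnerProductSpace ℝ F] [CompleteSpace E] [CompleteSpace F]
  {φ : E → F → ℝ}

theorem convex_concave_sub_le_inner_gradient {x x' : E} {y y' : F}
    (hconv : ConvexOn ℝ Set.univ fun x => φ x y)
    (hconc : ConcaveOn ℝ Set.univ fun y => φ x y)
    (hdx : DifferentiableAt ℝ (fun x => φ x y) x) (hdy : DifferentiableAt ℝ (fun y => φ x y) y) :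
    φ x y' - φ x' y ≤
      ⟪gradient (fun x => φ x y) x, x - x'⟫ - ⟪gradient (fun y => φ x y) y, y - y'⟫ := by
  have hx := hconv.add_inner_gradient_sub_le (Set.mem_univ x) (Set.mem_univ x') hdx.hasGradientAt
  have hy := hconc.le_add_inner_gradient_sub (Set.mem_univ y) (Set.mem_univ y') hdy.hasGradientAt
  rw [← neg_sub x, inner_neg_right] at hx
  rw [← neg_sub y, inner_neg_right] at hy
  linarith

theorem convex_concave_map_sum_sub_map_sum_le_inner_gradient
    {ι : Type*} {s : Finset ι} {w : ι → ℝ} {p : ι → E} {q : ι → F}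
    (hdx : ∀ y, Differentiable ℝ fun x => φ x y) (hdy : ∀ x, Differentiable ℝ fun y => φ x y)
    (hconv : ∀ y, ConvexOn ℝ Set.univ fun x => φ x y)
    (hconc : ∀ x, ConcaveOn ℝ Set.univ fun y => φ x y)
    (hw₀ : ∀ i ∈ s, 0 ≤ w i) (hw₁ : ∑ i ∈ s, w i = 1) (x' : E) (y' : F) :
    φ (∑ i ∈ s, w i • p i) y' - φ x' (∑ i ∈ s, w i • q i) ≤
      ∑ i ∈ s, w i * (⟪gradient (fun x => φ x (q i)) (p i), p i - x'⟫
        - ⟪gradient (fun y => φ (p i) y) (q i), q i - y'⟫) :=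
  (convex_concave_map_sum_sub_map_sum_le (hconv y') (hconc x') hw₀ hw₁).trans <|
    Finset.sum_le_sum fun i hi => mul_le_mul_of_nonneg_left
      (convex_concave_sub_le_inner_gradient (hconv _) (hconc _) (hdx _ _) (hdy _ _)) (hw₀ i hi)

end ConvexConcave

theorem csSup_image_sub_csInf_image_le {α β : Type*} {X : Set α} {Y : Set β} {f : β → ℝ}
    {g : α → ℝ} {G : α × β → ℝ} (hX : X.Nonempty) (hY : Y.Nonempty)
    (hG : BddAbove (G '' X ×ˢ Y)) (h : ∀ x ∈ X, ∀ y ∈ Y, f y - g x ≤ G (x, y)) :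
    sSup (f '' Y) - sInf (g '' X) ≤ sSup (G '' X ×ˢ Y) := by
  rw [sub_le_iff_le_add']
  refine csSup_le (hY.image f) ?_
  rintro _ ⟨y, hy, rfl⟩
  rw [← sub_le_iff_le_add]
  refine le_csInf (hX.image g) ?_
  rintro _ ⟨x, hx, rfl⟩
  have := le_csSup hG ⟨(x, y), ⟨hx, hy⟩, rfl⟩
  linarith [h x hx y hy]

theorem saddle_gap_le_sup_average_linearization_general (nx ny N : ℕ)
    (X : Set (EuclideanSpace ℝ (Fin nx))) (Y : Set (EuclideanSpace ℝ (Fin ny)))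
    (hXc : IsCompact X) (hYc : IsCompact Y)
    (hXne : X.Nonempty) (hYne : Y.Nonempty)
    (φ : EuclideanSpace ℝ (Fin nx) → EuclideanSpace ℝ (Fin ny) → ℝ)
    (hdx : ∀ y, Differentiable ℝ fun x => φ x y)
    (hdy : ∀ x, Differentiable ℝ fun y => φ x y)
    (hconv : ∀ y, ConvexOn ℝ Set.univ fun x => φ x y)
    (hconc : ∀ x, ConcaveOn ℝ Set.univ fun y => φ x y)
    (zx : ℕ → EuclideanSpace ℝ (Fin nx)) (zy : ℕ → EuclideanSpace ℝ (Fin ny))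
    (xbar : EuclideanSpace ℝ (Fin nx)) (ybar : EuclideanSpace ℝ (Fin ny))
    (hxbar : xbar = ((N : ℝ) + 1)⁻¹ • ∑ k ∈ Finset.range (N + 1), zx k)
    (hybar : ybar = ((N : ℝ) + 1)⁻¹ • ∑ k ∈ Finset.range (N + 1), zy k) :
    sSup ((fun y' => φ xbar y') '' Y) - sInf ((fun x' => φ x' ybar) '' X) ≤
      sSup ((fun u : EuclideanSpace ℝ (Fin nx) × EuclideanSpace ℝ (Fin ny) =>
        ((N : ℝ) + 1)⁻¹ * ∑ k ∈ Finset.range (N + 1),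
          (⟪gradient (fun x => φ x (zy k)) (zx k), zx k - u.1⟫
            - ⟪gradient (fun y => φ (zx k) y) (zy k), zy k - u.2⟫)) '' (X ×ˢ Y)) := by
  have hw₁ : ∑ _k ∈ Finset.range (N + 1), ((N : ℝ) + 1)⁻¹ = 1 := by
    rw [Finset.sum_const, Finset.card_range, nsmul_eq_mul]
    push_cast
    exact mul_inv_cancel₀ (by positivity)
  refine csSup_image_sub_csInf_image_le hXne hYne
    ((hXc.prod hYc).image (by fun_prop)).bddAbove fun x' _ y' _ => ?_
  rw [hxbar, hybar, Finset.smul_sum, Finset.smul_sum, Finset.mul_sum]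
  exact convex_concave_map_sum_sub_map_sum_le_inner_gradient hdx hdy hconv hconc
    (fun _ _ => by positivity) hw₁ x' y'

/-- For a differentiable convex-concave function `φ` on `Z = X × Y` (compact convex
nonempty), iterates `z_k = (zx k, zy k) ∈ Z`, `k = 0, …, N`, and their averages
`x̄_N, ȳ_N`, the saddle-point gap satisfies
`max_{y'∈Y} φ(x̄_N, y') − min_{x'∈X} φ(x', ȳ_N)
   ≤ max_{u∈Z} (1/(N+1)) ∑_{k=0}^N ⟨G(z_k), z_k − u⟩`,
where `G(z) = (∇_x φ(z), −∇_y φ(z))`. -/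
theorem saddle_gap_le_sup_average_linearization (nx ny N : ℕ)
    (X : Set (EuclideanSpace ℝ (Fin nx))) (Y : Set (EuclideanSpace ℝ (Fin ny)))
    (hXc : IsCompact X) (hYc : IsCompact Y) (hX : Convex ℝ X) (hY : Convex ℝ Y)
    (hXne : X.Nonempty) (hYne : Y.Nonempty)
    (φ : EuclideanSpace ℝ (Fin nx) → EuclideanSpace ℝ (Fin ny) → ℝ)
    (hdx : ∀ y, Differentiable ℝ fun x => φ x y)
    (hdy : ∀ x, Differentiable ℝ fun y => φ x y)
    (hconv : ∀ y, ConvexOn ℝ Set.univ fun x => φ x y)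
    (hconc : ∀ x, ConcaveOn ℝ Set.univ fun y => φ x y)
    (zx : ℕ → EuclideanSpace ℝ (Fin nx)) (zy : ℕ → EuclideanSpace ℝ (Fin ny))
    (hzx : ∀ k ≤ N, zx k ∈ X) (hzy : ∀ k ≤ N, zy k ∈ Y)
    (xbar : EuclideanSpace ℝ (Fin nx)) (ybar : EuclideanSpace ℝ (Fin ny))
    (hxbar : xbar = ((N : ℝ) + 1)⁻¹ • ∑ k ∈ Finset.range (N + 1), zx k)
    (hybar : ybar = ((N : ℝ) + 1)⁻¹ • ∑ k ∈ Finset.range (N + 1), zy k) :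
    sSup ((fun y' => φ xbar y') '' Y) - sInf ((fun x' => φ x' ybar) '' X) ≤
      sSup ((fun u : EuclideanSpace ℝ (Fin nx) × EuclideanSpace ℝ (Fin ny) =>
        ((N : ℝ) + 1)⁻¹ * ∑ k ∈ Finset.range (N + 1),
          (⟪gradient (fun x => φ x (zy k)) (zx k), zx k - u.1⟫
            - ⟪gradient (fun y => φ (zx k) y) (zy k), zy k - u.2⟫)) '' (X ×ˢ Y)) :=
  saddle_gap_le_sup_average_linearization_general nx ny N X Y hXc hYc hXne hYne φ hdx hdy hconv
    hconc zx zy xbar ybar hxbar hybar
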